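/- arXiv:2001.10315 — 8 statements merged into one kernel-verified Lean document; each statement's English description precedes it below -/
import Mathlib

section
/- For any integer a and any positive integer m, lcm(a-1, a^2-1, ..., a^m-1) = ∏_{k=1}^m Φ_k(a), where Φ_k denotes the k-th cyclotomic polynomial evaluated at a. -/
/-!
Induct on a finite divisor-closed set `S`, removing its largest element `m`. Writing
`T = S \ {m}` and `f k = a ^ k - 1`, the key fact is
`gcd (lcm_{k ∈ T} f k, f m) ~ lcm_{d ∣ m, d < m} f d`: one direction is `f d ∣ f m` for `d ∣ m`,
the other is distributivity of `gcd` over `lcm` together with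
`gcd (f k, f m) ∣ f (gcd k m)`, which holds because `a ^ k = a ^ m = 1` forces
`a ^ gcd k m = 1` modulo any common divisor. By induction the right-hand side is
`∏_{d ∣ m, d < m} Φ_d(a)`, and since `f m = Φ_m(a) · ∏_{d ∣ m, d < m} Φ_d(a)`, the identity
`gcd · lcm ~ product` gives `lcm_{k ∈ S} f k ~ Φ_m(a) · lcm_{k ∈ T} f k`.
-/

open Finset Polynomial

theorem dvd_pow_gcd_sub_one_iff {R : Type*} [CommRing R] {d a : R} {k n : ℕ} :
    d ∣ a ^ k.gcd n - 1 ↔ d ∣ a ^ k - 1 ∧ d ∣ a ^ n - 1 := by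
  simp only [← Ideal.Quotient.eq_zero_iff_dvd, map_sub, map_pow, map_one, sub_eq_zero,
    pow_gcd_eq_one]

theorem Nat.gcd_lcm_dvd_lcm_gcd (x y b : ℕ) :
    gcd (lcm x y) b ∣ lcm (gcd x b) (gcd y b) := by
  rcases eq_or_ne x 0 with rfl | hx
  · simpa using Nat.dvd_lcm_left b (gcd y b)
  rcases eq_or_ne y 0 with rfl | hy
  · simpa using Nat.dvd_lcm_right (gcd x b) b
  rcases eq_or_ne b 0 with rfl | hb
  · simp
  rw [← Nat.factorization_le_iff_dvd (gcd_ne_zero_right hb)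
      (lcm_ne_zero (gcd_ne_zero_right hb) (gcd_ne_zero_right hb)),
    factorization_gcd (lcm_ne_zero hx hy) hb, factorization_lcm hx hy,
    factorization_lcm (gcd_ne_zero_right hb) (gcd_ne_zero_right hb),
    factorization_gcd hx hb, factorization_gcd hy hb]
  intro p
  simp only [Finsupp.inf_apply, Finsupp.sup_apply]
  omega

theorem Int.gcd_lcm_dvd_lcm_gcd (x y b : ℤ) :
    GCDMonoid.gcd (GCDMonoid.lcm x y) b ∣
      GCDMonoid.lcm (GCDMonoid.gcd x b) (GCDMonoid.gcd y b) := by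
  simpa only [← Int.coe_gcd, ← Int.coe_lcm, Int.gcd, Int.lcm, Int.natAbs_natCast,
    Int.natCast_dvd_natCast] using Nat.gcd_lcm_dvd_lcm_gcd x.natAbs y.natAbs b.natAbs

theorem Int.gcd_finset_lcm_dvd {ι : Type*} [DecidableEq ι] (s : Finset ι) (f : ι → ℤ) (b : ℤ) :
    GCDMonoid.gcd (s.lcm f) b ∣ s.lcm (fun i => GCDMonoid.gcd (f i) b) := by
  induction s using Finset.induction_on with
  | empty => simp
  | insert i s hi ih =>
    rw [lcm_insert, lcm_insert]
    exact (Int.gcd_lcm_dvd_lcm_gcd _ _ _).trans (lcm_dvd_lcm dvd_rfl ih)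

theorem lcm_mul_associated_of_gcd_associated {α : Type*} [CommMonoidWithZero α]
    [GCDMonoid α] {x y z : α} (h : Associated (gcd x (y * z)) z) :
    Associated (lcm x (y * z)) (x * y) := by
  rcases eq_or_ne z 0 with rfl | hz
  · obtain rfl : x = 0 := by simpa using h
    simp
  refine Associated.of_mul_left ?_ (Associated.refl z) hz
  have hprod : x * (y * z) = z * (x * y) := by ac_rfl
  exact (h.symm.mul_right _).trans (hprod ▸ gcd_mul_lcm x (y * z))

theorem Polynomial.cyclotomic_mul_prod_properDivisors (R : Type*) [CommRing R] {n : ℕ}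
    (hn : 0 < n) : cyclotomic n R * ∏ d ∈ n.properDivisors, cyclotomic d R = X ^ n - 1 := by
  rw [← prod_cyclotomic_eq_X_pow_sub_one hn, ← Nat.cons_self_properDivisors hn.ne', prod_cons]

def DivisorClosed (S : Finset ℕ) : Prop :=
  ∀ k ∈ S, ∀ d, d ∣ k → d ∈ S

theorem divisorClosed_properDivisors (n : ℕ) : DivisorClosed n.properDivisors := by
  intro k hk d hdk
  obtain ⟨hkn, hk_lt⟩ := Nat.mem_properDivisors.1 hk
  exact Nat.mem_properDivisors.2
    ⟨hdk.trans hkn, (Nat.le_of_dvd (Nat.pos_of_mem_properDivisors hk) hdk).trans_lt hk_lt⟩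

namespace DivisorClosed

variable {S : Finset ℕ} {k m : ℕ}

theorem pos (hS : DivisorClosed S) (hk : k ∈ S) : 0 < k := by
  refine Nat.pos_of_ne_zero fun hk0 => ?_
  have hbig : S.sup id + 1 ≤ S.sup id := le_sup (f := id) (hS k hk _ (hk0 ▸ dvd_zero _))
  omega

theorem erase_max (hS : DivisorClosed S) (hm : ∀ k ∈ S, k ≤ m) : DivisorClosed (S.erase m) := by
  intro k hk d hdk
  obtain ⟨hkm, hkS⟩ := mem_erase.1 hk
  refine mem_erase.2 ⟨?_, hS k hkS d hdk⟩
  rintro rfl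
  exact hkm (le_antisymm (hm k hkS) (Nat.le_of_dvd (hS.pos hkS) hdk))

theorem gcd_mem_properDivisors (hS : DivisorClosed S) (hmS : m ∉ S) (hm : 0 < m)
    (hk : k ∈ S) : k.gcd m ∈ m.properDivisors := by
  refine Nat.mem_properDivisors.2 ⟨Nat.gcd_dvd_right k m, (Nat.gcd_le_right k hm).lt_of_ne ?_⟩
  intro hgcd
  exact hmS (hS k hk m (hgcd ▸ Nat.gcd_dvd_left k m))

end DivisorClosed

theorem divisorClosed_Icc_one (n : ℕ) : DivisorClosed (Icc 1 n) := by
  intro k hk d hdk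
  rw [mem_Icc] at hk ⊢
  exact ⟨Nat.pos_of_dvd_of_pos hdk hk.1, (Nat.le_of_dvd hk.1 hdk).trans hk.2⟩

theorem associated_gcd_lcm_pow_sub_one (a : ℤ) {T : Finset ℕ} {m : ℕ} (hT : DivisorClosed T)
    (hmT : m ∉ T) (hm : 0 < m) (hPD : m.properDivisors ⊆ T) :
    Associated (gcd (T.lcm (a ^ · - 1)) (a ^ m - 1)) (m.properDivisors.lcm (a ^ · - 1)) := by
  refine associated_of_dvd_dvd ?_ ?_
  · refine (Int.gcd_finset_lcm_dvd T _ _).trans (lcm_dvd fun k hk => ?_)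
    exact (dvd_pow_gcd_sub_one_iff.2 ⟨gcd_dvd_left _ _, gcd_dvd_right _ _⟩).trans
      (dvd_lcm (hT.gcd_mem_properDivisors hmT hm hk))
  · exact dvd_gcd (lcm_dvd fun d hd => dvd_lcm (hPD hd))
      (lcm_dvd fun d hd => dvd_pow_sub_one_of_dvd (Nat.mem_properDivisors.1 hd).1)

theorem associated_lcm_pow_sub_one_prod_cyclotomic (a : ℤ) {S : Finset ℕ}
    (hS : DivisorClosed S) :
    Associated (S.lcm (a ^ · - 1)) (∏ k ∈ S, (cyclotomic k ℤ).eval a) := by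
  induction S using Finset.strongInduction with
  | H S ih =>
  rcases S.eq_empty_or_nonempty with rfl | hne
  · simp
  set m := S.max' hne
  have hmS : m ∈ S := S.max'_mem hne
  have hm : 0 < m := hS.pos hmS
  have hT : DivisorClosed (S.erase m) := hS.erase_max (S.le_max' · )
  have hPD : m.properDivisors ⊆ S.erase m := fun d hd =>
    mem_erase.2 ⟨(Nat.mem_properDivisors.1 hd).2.ne, hS m hmS d (Nat.mem_properDivisors.1 hd).1⟩
  have hgcd : Associated (gcd ((S.erase m).lcm (a ^ · - 1)) (a ^ m - 1))
      (∏ d ∈ m.properDivisors, (cyclotomic d ℤ).eval a) :=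
    (associated_gcd_lcm_pow_sub_one a hT (notMem_erase m S) hm hPD).trans
      (ih _ (hPD.trans_ssubset (erase_ssubset hmS)) (divisorClosed_properDivisors m))
  have hfactor : a ^ m - 1 =
      (cyclotomic m ℤ).eval a * ∏ d ∈ m.properDivisors, (cyclotomic d ℤ).eval a := by
    simpa [eval_prod] using congrArg (eval a) (cyclotomic_mul_prod_properDivisors ℤ hm).symm
  rw [← insert_erase hmS, lcm_insert, prod_insert (notMem_erase m S), lcm_comm, mul_comm]
  rw [hfactor] at hgcd ⊢
  exact (lcm_mul_associated_of_gcd_associated hgcd).trans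
    ((ih _ (erase_ssubset hmS) hT).mul_right _)

theorem stmt0_general (a : ℤ) (m : ℕ) :
    Associated ((Finset.Icc 1 m).lcm (fun k => a ^ k - 1))
      (∏ k ∈ Finset.Icc 1 m, (Polynomial.cyclotomic k ℤ).eval a) :=
  associated_lcm_pow_sub_one_prod_cyclotomic a (divisorClosed_Icc_one m)

theorem stmt0 (a : ℤ) (m : ℕ) (hm : 1 ≤ m) :
    Associated ((Finset.Icc 1 m).lcm (fun k => a ^ k - 1))
      (∏ k ∈ Finset.Icc 1 m, (Polynomial.cyclotomic k ℤ).eval a) :=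
  stmt0_general a m
end

section
/- For positive integers k and l with k < l, the integer gcd(Φ_k(a), Φ_l(a)) is greater than 1 for some integer a only if l/k is a prime power; in particular, if k < m, k does not divide m, then gcd(Φ_k(a), Φ_m(a)) = 1 for every integer a. -/
/-!
If a prime `q` divides `Φ_n(a)`, then `a mod q` is a primitive root of unity whose order is the
`q`-free part of `n`. A common prime factor `q` of `Φ_k(a)` and `Φ_l(a)` therefore forces `k` and
`l` to have the same `q`-free part, i.e. `l = k * q ^ j`, with `j ≥ 1` because `k < l`.
-/

open Polynomial

theorem isPrimitiveRoot_ordCompl_of_isRoot_cyclotomic {R : Type*} [CommRing R] [IsDomain R]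
    {p n : ℕ} [Fact p.Prime] [CharP R p] (hn : n ≠ 0) {μ : R}
    (h : (cyclotomic n R).IsRoot μ) : IsPrimitiveRoot μ (ordCompl[p] n) := by
  have : NeZero (ordCompl[p] n : R) :=
    ⟨fun h0 => Nat.not_dvd_ordCompl Fact.out hn ((CharP.cast_eq_zero_iff R p _).mp h0)⟩
  rw [← Nat.ordProj_mul_ordCompl_eq_self n p] at h
  exact isRoot_cyclotomic_prime_pow_mul_iff_of_charP.mp h

theorem exists_eq_mul_pow_of_ordCompl_eq {p k l : ℕ} (hp : p.Prime) (hkl : k < l)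
    (h : ordCompl[p] k = ordCompl[p] l) : ∃ j, 1 ≤ j ∧ l = k * p ^ j := by
  have hk_split := Nat.ordProj_mul_ordCompl_eq_self k p
  have hl_split := Nat.ordProj_mul_ordCompl_eq_self l p
  have he : k.factorization p < l.factorization p := by
    by_contra! hle
    have := Nat.mul_le_mul_right (ordCompl[p] k) (Nat.pow_le_pow_right hp.pos hle)
    rw [hk_split, h, hl_split] at this
    omega
  refine ⟨l.factorization p - k.factorization p, by omega, ?_⟩
  calc l = p ^ l.factorization p * ordCompl[p] l := hl_split.symm
    _ = p ^ (k.factorization p + (l.factorization p - k.factorization p)) * ordCompl[p] k := by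
      rw [Nat.add_sub_cancel' he.le, h]
    _ = k * p ^ (l.factorization p - k.factorization p) := by rw [pow_add, mul_right_comm, hk_split]

theorem exists_eq_mul_pow_of_prime_dvd_cyclotomic_eval {q k l : ℕ} (hq : q.Prime) (hk : k ≠ 0)
    (hkl : k < l) {a : ℤ} (hqk : (q : ℤ) ∣ (cyclotomic k ℤ).eval a)
    (hql : (q : ℤ) ∣ (cyclotomic l ℤ).eval a) : ∃ j, 1 ≤ j ∧ l = k * q ^ j := by
  have : Fact q.Prime := ⟨hq⟩
  have root_mod_q {n : ℕ} (hn : n ≠ 0) (hqn : (q : ℤ) ∣ (cyclotomic n ℤ).eval a) :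
      IsPrimitiveRoot (a : ZMod q) (ordCompl[q] n) := by
    refine isPrimitiveRoot_ordCompl_of_isRoot_cyclotomic hn ?_
    rw [← map_cyclotomic_int, IsRoot.def, eval_intCast_map, eq_intCast,
      ZMod.intCast_zmod_eq_zero_iff_dvd]
    exact hqn
  exact exists_eq_mul_pow_of_ordCompl_eq hq hkl
    ((root_mod_q hk hqk).unique (root_mod_q (by omega) hql))

theorem exists_eq_mul_prime_pow_of_gcd_cyclotomic_eval_ne_one {k l : ℕ} (hk : k ≠ 0)
    (hkl : k < l) {a : ℤ}
    (h : Int.gcd ((cyclotomic k ℤ).eval a) ((cyclotomic l ℤ).eval a) ≠ 1) :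
    ∃ p j : ℕ, p.Prime ∧ 1 ≤ j ∧ l = k * p ^ j := by
  -- This also covers `gcd = 0`, i.e. both values vanishing: every prime divides `0`.
  obtain ⟨q, hq, hqdvd⟩ := Nat.exists_prime_and_dvd h
  have hqdvd' := Int.natCast_dvd_natCast.mpr hqdvd
  obtain ⟨j, hj, rfl⟩ := exists_eq_mul_pow_of_prime_dvd_cyclotomic_eval hq hk hkl
    (hqdvd'.trans (Int.gcd_dvd_left _ _)) (hqdvd'.trans (Int.gcd_dvd_right _ _))
  exact ⟨q, j, hq, hj, rfl⟩

theorem stmt1 :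
    (∀ k l : ℕ, 0 < k → k < l →
      (∃ a : ℤ, 1 < Int.gcd ((Polynomial.cyclotomic k ℤ).eval a)
          ((Polynomial.cyclotomic l ℤ).eval a)) →
      ∃ p j : ℕ, p.Prime ∧ 1 ≤ j ∧ l = k * p ^ j) ∧
    (∀ k m : ℕ, 0 < k → k < m → ¬ k ∣ m → ∀ a : ℤ,
      Int.gcd ((Polynomial.cyclotomic k ℤ).eval a)
        ((Polynomial.cyclotomic m ℤ).eval a) = 1) := by
  refine ⟨fun k l hk hkl ⟨a, ha⟩ =>
    exists_eq_mul_prime_pow_of_gcd_cyclotomic_eval_ne_one hk.ne' hkl ha.ne', ?_⟩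
  intro k m hk hkm hndvd a
  by_contra hgcd
  obtain ⟨p, j, -, -, rfl⟩ := exists_eq_mul_prime_pow_of_gcd_cyclotomic_eval_ne_one hk.ne' hkm hgcd
  exact hndvd (dvd_mul_right k _)
end

section
/- For any integer a and any positive integers k and m, the integer D_m(a) divides D_m(a^k), where D_m(n) = ∏_{j=1}^m Φ_j(n). -/
/-!
If `ζ` is a primitive `j`-th root of unity then `ζ ^ k` is a primitive `j / gcd(j, k)`-th root of
unity, so the minimal polynomial `Φ_j` of `ζ` divides `Φ_{j / gcd(j, k)}(X ^ k)`, and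
`j / gcd(j, k) ≤ j`. Over `ℚ` the `Φ_j` are pairwise coprime, hence `∏_{j ≤ m} Φ_j` divides
`∏_{j ≤ m} Φ_j(X ^ k)`; both are monic with integer coefficients, so the divisibility holds in
`ℤ[X]` and survives evaluation at `a`.
-/

open Polynomial Finset

theorem IsPrimitiveRoot.pow_div_gcd {M : Type*} [CommMonoid M] {ζ : M} {n k : ℕ}
    (h : IsPrimitiveRoot ζ n) (hk : k ≠ 0) : IsPrimitiveRoot (ζ ^ k) (n / n.gcd k) :=
  IsPrimitiveRoot.iff_orderOf.2 (by rw [orderOf_pow' ζ hk, h.eq_orderOf])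

theorem cyclotomic_dvd_cyclotomic_div_gcd_comp_X_pow {j k : ℕ} (hj : 0 < j) (hk : k ≠ 0) :
    cyclotomic j ℤ ∣ (cyclotomic (j / j.gcd k) ℤ).comp (X ^ k) := by
  have hζ := Complex.isPrimitiveRoot_exp j hj.ne'
  rw [cyclotomic_eq_minpoly hζ hj]
  refine minpoly.isIntegrallyClosed_dvd (hζ.isIntegral hj) ?_
  rw [aeval_comp, aeval_X_pow, aeval_def, eval₂_eq_eval_map, map_cyclotomic]
  exact (hζ.pow_div_gcd hk).isRoot_cyclotomic (Nat.div_gcd_pos_of_pos_left k hj)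

theorem prod_cyclotomic_dvd_prod_cyclotomic_comp_X_pow (m : ℕ) {k : ℕ} (hk : k ≠ 0) :
    ∏ j ∈ Icc 1 m, cyclotomic j ℤ ∣ ∏ j ∈ Icc 1 m, (cyclotomic j ℤ).comp (X ^ k) := by
  have hmonic : (∏ j ∈ Icc 1 m, cyclotomic j ℤ).Monic :=
    monic_prod_of_monic _ _ fun j _ => cyclotomic.monic j ℤ
  rw [← map_dvd_map (Int.castRingHom ℚ) Int.cast_injective hmonic]
  simp only [Polynomial.map_prod, Polynomial.map_comp, Polynomial.map_pow, map_X, map_cyclotomic]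
  refine prod_dvd_of_coprime (fun i _ j _ hij => cyclotomic.isCoprime_rat hij) fun j hj => ?_
  obtain ⟨hj1, hjm⟩ := mem_Icc.1 hj
  have hdiv : j / j.gcd k ∈ Icc 1 m :=
    mem_Icc.2 ⟨Nat.div_gcd_pos_of_pos_left k hj1, (Nat.div_le_self j _).trans hjm⟩
  refine dvd_trans ?_ (dvd_prod_of_mem _ hdiv)
  simpa only [Polynomial.map_comp, Polynomial.map_pow, map_X, map_cyclotomic] using
    Polynomial.map_dvd (Int.castRingHom ℚ) (cyclotomic_dvd_cyclotomic_div_gcd_comp_X_pow hj1 hk)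

theorem stmt2_general (a : ℤ) (k m : ℕ) (hk : 0 < k) :
    (∏ j ∈ Finset.Icc 1 m, (Polynomial.cyclotomic j ℤ).eval a) ∣
      (∏ j ∈ Finset.Icc 1 m, (Polynomial.cyclotomic j ℤ).eval (a ^ k)) := by
  simpa only [eval_prod, eval_comp, eval_pow, eval_X] using
    eval_dvd (x := a) (prod_cyclotomic_dvd_prod_cyclotomic_comp_X_pow m hk.ne')

theorem stmt2 (a : ℤ) (k m : ℕ) (hk : 0 < k) (hm : 0 < m) :
    (∏ j ∈ Finset.Icc 1 m, (Polynomial.cyclotomic j ℤ).eval a) ∣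
      (∏ j ∈ Finset.Icc 1 m, (Polynomial.cyclotomic j ℤ).eval (a ^ k)) :=
  stmt2_general a k m hk
end

section
/- For every prime p and every m ≥ 1, the exponent of the group GL(m, F_p) equals p^⌈log_p m⌉ · lcm(p-1, p^2-1, ..., p^m-1). -/
/-!
Let `q = |K|`, `p = char K` and `t = ⌈log_p m⌉`. If `A ∈ GL(m, K)`, every irreducible factor
`r` of its minimal polynomial `μ` has degree `d ≤ m` and is not `X`, so `r ∣ X ^ (q ^ d - 1) - 1`,
which divides `X ^ L - 1` with `L = lcm (q ^ k - 1 : 1 ≤ k ≤ m)`. As `deg μ ≤ m ≤ p ^ t`, we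
get `μ ∣ (X ^ L - 1) ^ (p ^ t) = X ^ (p ^ t * L) - 1`, hence `A ^ (p ^ t * L) = 1`.

Conversely, left multiplication embeds the units of any `m`-dimensional commutative
`K`-algebra into `GL(m, K)`. In `K[X]/(X ^ m)` the unit `1 + X` has order `p ^ t`, because
`(1 + X) ^ (p ^ s) = 1 + X ^ (p ^ s)`; in `𝔽_{q ^ k} × K ^ (m - k)` a generator of `𝔽_{q ^ k}ˣ`
has order `q ^ k - 1`. Since `p ^ t` is coprime to `L`, its product with `L` divides the exponent.
-/

open Matrix Polynomial

def glExponent (p q m : ℕ) : ℕ :=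
  p ^ Nat.clog p m * (Finset.Icc 1 m).lcm fun k => q ^ k - 1

theorem Irreducible.dvd_X_pow_card_pow_natDegree_sub_one_sub_one {K : Type*} [Field K] [Finite K]
    {r : K[X]} (hr : Irreducible r) (hrX : ¬ r ∣ X) :
    r ∣ X ^ (Nat.card K ^ r.natDegree - 1) - 1 := by
  have hfrob : r ∣ X ^ Nat.card K ^ r.natDegree - X :=
    hr.natDegree_dvd_iff_dvd_X_pow_card_pow_sub_X.mp dvd_rfl
  rw [← Nat.sub_add_cancel (Nat.one_le_pow _ _ Nat.card_pos), pow_succ, ← sub_one_mul] at hfrob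
  exact (hr.prime.dvd_or_dvd hfrob).resolve_right hrX

theorem Polynomial.dvd_pow_natDegree_of_forall_irreducible_dvd {K : Type*} [Field K]
    {f c : K[X]} (hf : f ≠ 0) (h : ∀ r, Irreducible r → r ∣ f → r ∣ c) :
    f ∣ c ^ f.natDegree := by
  induction f using WfDvdMonoid.induction_on_irreducible with
  | zero => exact absurd rfl hf
  | unit u hu => simpa [natDegree_eq_zero_of_isUnit hu] using hu.dvd
  | mul g r hg hr ih =>
    rw [natDegree_mul hr.ne_zero hg, pow_add]
    exact mul_dvd_mul ((h r hr (dvd_mul_right r g)).trans (dvd_pow_self c hr.natDegree_pos.ne'))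
      (ih hg fun s hs hsg => h s hs (hsg.trans (dvd_mul_left g r)))

theorem Polynomial.dvd_X_pow_glExponent_sub_one {K : Type*} [Field K] [Finite K] (p : ℕ)
    [Fact p.Prime] [CharP K p] {f : K[X]} {n d : ℕ} (hn : n ≠ 0) (hf : f ∣ X ^ n - 1)
    (hd : f.natDegree ≤ d) : f ∣ X ^ glExponent p (Nat.card K) d - 1 := by
  set L := (Finset.Icc 1 d).lcm fun k => Nat.card K ^ k - 1
  have hf0 : f ≠ 0 := ne_zero_of_dvd_ne_zero
    (by simpa using X_pow_sub_C_ne_zero (Nat.pos_of_ne_zero hn) (1 : K)) hf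
  have hfactor : ∀ r, Irreducible r → r ∣ f → r ∣ X ^ L - 1 := by
    intro r hr hrf
    have hrX : ¬ r ∣ X := fun hrX => hr.not_isUnit <| isUnit_of_dvd_one <| by
      simpa using dvd_sub (hrX.trans (dvd_pow_self X hn)) (hrf.trans hf)
    have hdeg : Nat.card K ^ r.natDegree - 1 ∣ L := Finset.dvd_lcm <| Finset.mem_Icc.mpr
      ⟨hr.natDegree_pos, (natDegree_le_of_dvd hrf hf0).trans hd⟩
    obtain ⟨c, hc⟩ := hdeg
    rw [hc]
    exact (hr.dvd_X_pow_card_pow_natDegree_sub_one_sub_one hrX).trans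
      (pow_one_sub_dvd_pow_mul_sub_one _ _ _)
  have hclog : f.natDegree ≤ p ^ Nat.clog p d :=
    hd.trans (Nat.le_pow_clog (Fact.out : p.Prime).one_lt d)
  calc f ∣ (X ^ L - 1) ^ f.natDegree := dvd_pow_natDegree_of_forall_irreducible_dvd hf0 hfactor
    _ ∣ (X ^ L - 1) ^ p ^ Nat.clog p d := pow_dvd_pow _ hclog
    _ = X ^ glExponent p (Nat.card K) d - 1 := by
      rw [sub_pow_char_pow, one_pow, ← pow_mul, mul_comm, glExponent]

theorem Matrix.GeneralLinearGroup.pow_glExponent_eq_one {K n : Type*} [Field K] [Finite K]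
    [Fintype n] [DecidableEq n] (p : ℕ) [Fact p.Prime] [CharP K p] (A : GL n K) :
    A ^ glExponent p (Nat.card K) (Fintype.card n) = 1 := by
  have hA : (A : Matrix n n K) ^ orderOf A = 1 := by
    rw [← Units.val_pow_eq_pow_val, pow_orderOf_eq_one, Units.val_one]
  have hmin : minpoly K (A : Matrix n n K) ∣ X ^ orderOf A - 1 :=
    minpoly.dvd _ _ (by simp [hA])
  have hdeg : (minpoly K (A : Matrix n n K)).natDegree ≤ Fintype.card n := by
    simpa [charpoly_natDegree_eq_dim] using
      natDegree_le_of_dvd (minpoly_dvd_charpoly _) (charpoly_monic (A : Matrix n n K)).ne_zero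
  obtain ⟨c, hc⟩ := dvd_X_pow_glExponent_sub_one p (orderOf_pos A).ne' hmin hdeg
  ext1
  simpa [sub_eq_zero] using congrArg (aeval (A : Matrix n n K)) hc

theorem orderOf_dvd_exponent_GL {R A ι : Type*} [CommRing R] [Ring A] [Algebra R A] [Fintype ι]
    [DecidableEq ι] (b : Module.Basis ι R A) {x : A} (hx : IsUnit x) :
    orderOf x ∣ Monoid.exponent (GL ι R) := by
  have hinj : Function.Injective (Units.map (Algebra.leftMulMatrix b).toMonoidHom) :=
    Units.map_injective (Algebra.leftMulMatrix_injective b)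
  rw [← hx.unit_spec, orderOf_units, ← orderOf_injective _ hinj]
  exact Monoid.order_dvd_exponent _

theorem pow_eq_zero_iff_nilpotencyClass_le {R : Type*} [MonoidWithZero R] {x : R}
    (hx : IsNilpotent x) {n : ℕ} : x ^ n = 0 ↔ nilpotencyClass x ≤ n :=
  ⟨fun h => Nat.sInf_le h, fun h => pow_eq_zero_of_le h (pow_nilpotencyClass hx)⟩

theorem orderOf_one_add_of_isNilpotent {A : Type*} [CommRing A] (p : ℕ) [Fact p.Prime] [CharP A p]
    {r : A} (hr : IsNilpotent r) : orderOf (1 + r) = p ^ Nat.clog p (nilpotencyClass r) := by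
  have hp : p.Prime := Fact.out
  have hfrob : ∀ s, (1 + r) ^ p ^ s = 1 ↔ nilpotencyClass r ≤ p ^ s := fun s => by
    rw [add_pow_char_pow, one_pow, add_eq_left, pow_eq_zero_iff_nilpotencyClass_le hr]
  obtain ⟨j, hj, hord⟩ := (Nat.dvd_prime_pow hp).mp <| orderOf_dvd_of_pow_eq_one <|
    (hfrob _).mpr (Nat.le_pow_clog hp.one_lt _)
  have hle : Nat.clog p (nilpotencyClass r) ≤ j :=
    Nat.clog_le_of_le_pow <| (hfrob j).mp (hord ▸ pow_orderOf_eq_one (1 + r))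
  rw [hord, le_antisymm hj hle]

theorem AdjoinRoot.nilpotencyClass_root_X_pow {K : Type*} [Field K] (m : ℕ) :
    nilpotencyClass (root (X ^ m : K[X])) = m := by
  have h : ∀ e, root (X ^ m : K[X]) ^ e = 0 ↔ m ≤ e := fun e => by
    rw [← mk_X, ← map_pow, mk_eq_zero, pow_dvd_pow_iff X_ne_zero not_isUnit_X]
  simp only [nilpotencyClass, h]
  exact csInf_Ici

theorem pow_clog_dvd_exponent_GL (K : Type*) [Field K] (p : ℕ) [Fact p.Prime] [CharP K p]
    (m : ℕ) : p ^ Nat.clog p m ∣ Monoid.exponent (GL (Fin m) K) := by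
  rcases Nat.eq_zero_or_pos m with rfl | hm
  · simp
  let A := AdjoinRoot (X ^ m : K[X])
  let b : Module.Basis (Fin m) K A :=
    (AdjoinRoot.powerBasis (pow_ne_zero m X_ne_zero)).basis.reindex (finCongr (by simp))
  have : Nontrivial A := AdjoinRoot.nontrivial _ (by simpa using hm.ne')
  have : CharP A p := charP_of_injective_algebraMap (algebraMap K A).injective p
  have hr : IsNilpotent (AdjoinRoot.root (X ^ m : K[X])) :=
    ⟨m, by rw [← AdjoinRoot.mk_X, ← map_pow, AdjoinRoot.mk_self]⟩
  simpa [orderOf_one_add_of_isNilpotent p hr, AdjoinRoot.nilpotencyClass_root_X_pow] using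
    orderOf_dvd_exponent_GL b hr.isUnit_one_add

theorem card_pow_sub_one_dvd_exponent_GL (K : Type*) [Field K] [Finite K] {k m : ℕ} (hk : k ≠ 0)
    (hkm : k ≤ m) : Nat.card K ^ k - 1 ∣ Monoid.exponent (GL (Fin m) K) := by
  obtain ⟨p, _⟩ := CharP.exists K
  have : Fact p.Prime := ⟨CharP.char_is_prime K p⟩
  have : NeZero k := ⟨hk⟩
  let E := FiniteField.Extension K p k
  have : Finite E := Module.finite_of_finite K
  obtain ⟨g, hg⟩ := IsCyclic.exists_ofOrder_eq_natCard (α := Eˣ)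
  let b : Module.Basis (Fin m) K (E × (Fin (m - k) → K)) :=
    ((Module.finBasisOfFinrankEq K E (FiniteField.finrank_extension K p k)).prod
      (Pi.basisFun K _)).reindex (finSumFinEquiv.trans (finCongr (by omega)))
  have hunit : IsUnit ((g : E), (1 : Fin (m - k) → K)) :=
    Prod.isUnit_iff.mpr ⟨g.isUnit, isUnit_one⟩
  have hord : orderOf ((g : E), (1 : Fin (m - k) → K)) = Nat.card K ^ k - 1 := by
    rw [Prod.orderOf_mk, orderOf_one, Nat.lcm_one_right, orderOf_units, hg, Nat.card_units,
      FiniteField.natCard_extension]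
  exact hord ▸ orderOf_dvd_exponent_GL b hunit

theorem Nat.Coprime.pow_finset_lcm_pow_sub_one {p q : ℕ} (hq : q ≠ 0) (hpq : p ∣ q) (t : ℕ)
    {s : Finset ℕ} (hs : 0 ∉ s) : Nat.Coprime (p ^ t) (s.lcm fun k => q ^ k - 1) := by
  refine Nat.Coprime.pow_left t <| Nat.Coprime.coprime_dvd_right (s.lcm_dvd_prod _) <|
    Nat.Coprime.prod_right fun k hk => ?_
  have hqk : Nat.Coprime (q ^ k) (q ^ k - 1) :=
    (Nat.coprime_self_sub_right (Nat.one_le_pow _ _ (Nat.pos_of_ne_zero hq))).mpr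
      (Nat.coprime_one_right _)
  exact hqk.coprime_dvd_left (hpq.trans (dvd_pow_self q (ne_of_mem_of_not_mem hk hs)))

theorem Monoid.exponent_GL_eq_glExponent (K : Type*) [Field K] [Finite K] (p : ℕ) [Fact p.Prime]
    [CharP K p] (m : ℕ) : Monoid.exponent (GL (Fin m) K) = glExponent p (Nat.card K) m := by
  have hpK : p ∣ Nat.card K := by
    have := Fintype.ofFinite K
    exact (CharP.cast_eq_zero_iff K p _).mp (by simp [Nat.card_eq_fintype_card])
  have hcop := Nat.Coprime.pow_finset_lcm_pow_sub_one Nat.card_pos.ne' hpK (Nat.clog p m)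
    (s := Finset.Icc 1 m) (by simp)
  refine Nat.dvd_antisymm ?_ (hcop.mul_dvd_of_dvd_of_dvd (pow_clog_dvd_exponent_GL K p m) ?_)
  · exact Monoid.exponent_dvd_of_forall_pow_eq_one fun A => by
      simpa using A.pow_glExponent_eq_one p
  · refine Finset.lcm_dvd fun k hk => ?_
    have hk := Finset.mem_Icc.mp hk
    exact card_pow_sub_one_dvd_exponent_GL K (by omega) hk.2

theorem stmt6_general (p : ℕ) (hp : p.Prime) (m : ℕ) :
    Monoid.exponent (GL (Fin m) (ZMod p)) =
      p ^ Nat.clog p m * (Finset.Icc 1 m).lcm (fun k => p ^ k - 1) := by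
  have : Fact p.Prime := ⟨hp⟩
  rw [Monoid.exponent_GL_eq_glExponent (ZMod p) p m, glExponent, Nat.card_zmod]

theorem stmt6 (p : ℕ) (hp : p.Prime) (m : ℕ) (hm : 1 ≤ m) :
    Monoid.exponent (GL (Fin m) (ZMod p)) =
      p ^ Nat.clog p m * (Finset.Icc 1 m).lcm (fun k => p ^ k - 1) :=
  stmt6_general p hp m
end

section
/- Let m ≥ 2 and let n be a composite natural number. If D_m(p) divides K_m(n) for every prime p dividing n, then n is an m-Carmichael number, i.e., A^(K_m(n)) = I for all A ∈ GL(m, ℤ/nℤ). -/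
open Finset Matrix

noncomputable def Dm (m n : ℕ) : ℕ :=
  (∏ j ∈ Finset.Icc 1 m, (Polynomial.cyclotomic j ℤ).eval (n : ℤ)).toNat

def nablam (m n : ℕ) : ℕ := ∏ p ∈ n.primeFactors, p ^ (Nat.clog p m - 1)

noncomputable def Km (m n : ℕ) : ℕ := n * nablam m n * Dm m n

def IsMCarmichael (m n : ℕ) : Prop :=
  ¬ n.Prime ∧ 2 ≤ n ∧ ∀ A : GL (Fin m) (ZMod n), A ^ Km m n = 1

open Polynomial

/-! Reduce modulo each prime power `p ^ e` exactly dividing `n`. Modulo `p`, every irreducible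
factor of the characteristic polynomial of `A` has degree `d ≤ m` and nonzero constant term, so it
divides `X ^ (p ^ d - 1) - 1`, hence `X ^ D - 1` for `D = D_m(p)`. Thus `A ^ D - 1` is nilpotent of
index at most `m`, and the Frobenius gives `A ^ (D * p ^ c) ≡ 1 [mod p]` once `m ≤ p ^ c`. Raising
to the power `p ^ (e - 1)` lifts this to `1` modulo `p ^ e`. Finally `D * p ^ c * p ^ (e - 1)`
divides `K_m(n)` because `D_m(p)` is prime to `p`. -/

lemma natCast_Dm {m p : ℕ} (hp : 1 < p) :
    (Dm m p : ℤ) = ∏ j ∈ Icc 1 m, (cyclotomic j ℤ).eval (p : ℤ) :=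
  Int.toNat_of_nonneg (prod_pos fun j _ => cyclotomic_pos' j (by exact_mod_cast hp)).le

lemma pow_sub_one_dvd_Dm {m p d : ℕ} (hp : 1 < p) (hd : 0 < d) (hdm : d ≤ m) :
    p ^ d - 1 ∣ Dm m p := by
  have hdiv : ((p : ℤ) ^ d - 1) = ∏ j ∈ d.divisors, (cyclotomic j ℤ).eval (p : ℤ) := by
    simpa [eval_prod] using congrArg (eval (p : ℤ)) (prod_cyclotomic_eq_X_pow_sub_one hd ℤ).symm
  have hsub : d.divisors ⊆ Icc 1 m := fun j hj =>
    have hjd := Nat.dvd_of_mem_divisors hj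
    mem_Icc.2 ⟨Nat.pos_of_dvd_of_pos hjd hd, (Nat.le_of_dvd hd hjd).trans hdm⟩
  have : ((p ^ d - 1 : ℕ) : ℤ) ∣ Dm m p := by
    rw [natCast_Dm hp, Nat.cast_sub (Nat.one_le_pow _ _ (by omega)), Nat.cast_pow, Nat.cast_one,
      hdiv]
    exact prod_dvd_prod_of_subset _ _ _ hsub
  exact_mod_cast this

lemma Nat.Prime.coprime_Dm {m p : ℕ} (hp : p.Prime) : p.Coprime (Dm m p) := by
  refine (Nat.Prime.coprime_iff_not_dvd hp).2 fun hdvd => ?_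
  have hpZ : _root_.Prime (p : ℤ) := Nat.prime_iff_prime_int.1 hp
  have hdvdZ : (p : ℤ) ∣ Dm m p := by exact_mod_cast hdvd
  rw [natCast_Dm hp.one_lt] at hdvdZ
  obtain ⟨j, hj, hpj⟩ := hpZ.exists_mem_finset_dvd hdvdZ
  -- `Φ_j(p)` divides `p ^ j - 1`, which is prime to `p`.
  have hpow : (p : ℤ) ∣ (p : ℤ) ^ j - 1 := by
    simpa using hpj.trans (eval_dvd (cyclotomic.dvd_X_pow_sub_one j ℤ) (x := (p : ℤ)))
  have hj0 : j ≠ 0 := by have := (mem_Icc.1 hj).1; omega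
  exact hpZ.not_dvd_one (by simpa using (dvd_pow_self (p : ℤ) hj0).sub hpow)

lemma Dm_mul_pow_mul_pow_dvd_Km {m n p : ℕ} (hm : 2 ≤ m) (hp : p ∈ n.primeFactors)
    (hD : Dm m p ∣ Km m n) :
    Dm m p * p ^ Nat.clog p m * p ^ (n.factorization p - 1) ∣ Km m n := by
  have hpp := Nat.prime_of_mem_primeFactors hp
  have he : n.factorization p ≠ 0 := Finsupp.mem_support_iff.1 (n.support_factorization ▸ hp)
  have hc : 0 < Nat.clog p m := Nat.clog_pos hpp.one_lt (by omega)
  have hpow : p ^ Nat.clog p m * p ^ (n.factorization p - 1) ∣ n * nablam m n := by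
    have : p ^ Nat.clog p m * p ^ (n.factorization p - 1) =
        p ^ n.factorization p * p ^ (Nat.clog p m - 1) := by
      rw [← pow_add, ← pow_add]; congr 1; omega
    rw [this]
    exact mul_dvd_mul (Nat.ordProj_dvd n p) (dvd_prod_of_mem _ hp)
  have hcop : (Dm m p).Coprime (p ^ Nat.clog p m * p ^ (n.factorization p - 1)) :=
    hpp.coprime_Dm.symm.pow_right _ |>.mul_right (hpp.coprime_Dm.symm.pow_right _)
  rw [mul_assoc]
  exact hcop.mul_dvd_of_dvd_of_dvd hD (hpow.trans (dvd_mul_right _ _))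

theorem Polynomial.dvd_pow_natDegree_of_forall_prime_dvd {K : Type*} [Field K] {f h : K[X]}
    (hf : f ≠ 0) (H : ∀ g, Prime g → g ∣ f → g ∣ h) : f ∣ h ^ f.natDegree := by
  induction f using UniqueFactorizationMonoid.induction_on_prime with
  | h₁ => exact absurd rfl hf
  | h₂ u hu => exact hu.dvd
  | h₃ a g ha hg ih =>
    rw [natDegree_mul hg.ne_zero ha, pow_add]
    exact mul_dvd_mul ((H g hg (dvd_mul_right _ _)).trans
      (dvd_pow_self h hg.irreducible.natDegree_pos.ne'))
      (ih ha fun g' hg' hg'a => H g' hg' (hg'a.trans (dvd_mul_left _ _)))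

theorem Irreducible.dvd_X_pow_sub_one {F : Type*} [Field F] [Finite F] {g : F[X]}
    (hg : Irreducible g) (hg0 : g.coeff 0 ≠ 0) {D : ℕ}
    (hD : Nat.card F ^ g.natDegree - 1 ∣ D) : g ∣ X ^ D - 1 := by
  have hsplit : g ∣ X * (X ^ (Nat.card F ^ g.natDegree - 1) - 1) := by
    rw [mul_sub, mul_one, ← pow_succ', Nat.sub_add_cancel (Nat.one_le_pow _ _ Nat.card_pos)]
    exact hg.natDegree_dvd_iff_dvd_X_pow_card_pow_sub_X.1 dvd_rfl
  have hgX : ¬ g ∣ X := fun h => hg0 (X_dvd_iff.1 (hg.dvd_symm irreducible_X h))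
  obtain ⟨k, rfl⟩ := hD
  exact ((hg.prime.dvd_or_dvd hsplit).resolve_left hgX).trans
    (pow_one_sub_dvd_pow_mul_sub_one _ _ _)

theorem Matrix.pow_sub_one_pow_card_eq_zero {F ι : Type*} [Field F] [Finite F] [Fintype ι]
    [DecidableEq ι] {M : Matrix ι ι F} (hM : IsUnit M) {D : ℕ}
    (hD : ∀ d, 0 < d → d ≤ Fintype.card ι → Nat.card F ^ d - 1 ∣ D) :
    (M ^ D - 1) ^ Fintype.card ι = 0 := by
  have hf0 : M.charpoly ≠ 0 := M.charpoly_monic.ne_zero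
  have hcoeff : M.charpoly.coeff 0 ≠ 0 := fun h0 => by
    have hdet := (isUnit_iff_isUnit_det M).1 hM
    rw [det_eq_sign_charpoly_coeff, h0, mul_zero] at hdet
    exact not_isUnit_zero hdet
  have hdvd : M.charpoly ∣ (X ^ D - 1) ^ Fintype.card ι := by
    rw [← M.charpoly_natDegree_eq_dim]
    refine dvd_pow_natDegree_of_forall_prime_dvd hf0 fun g hg hgf => ?_
    have hdeg : g.natDegree ≤ Fintype.card ι :=
      M.charpoly_natDegree_eq_dim ▸ natDegree_le_of_dvd hgf hf0
    exact hg.irreducible.dvd_X_pow_sub_one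
      (fun h0 => hcoeff (X_dvd_iff.1 ((X_dvd_iff.2 h0).trans hgf)))
      (hD _ hg.irreducible.natDegree_pos hdeg)
  obtain ⟨q, hq⟩ := hdvd
  simpa [aeval_self_charpoly] using congrArg (aeval M) hq

theorem pow_prime_pow_eq_one_of_sub_one_pow_eq_zero {K A : Type*} [CommRing K] {p : ℕ}
    [Fact p.Prime] [CharP K p] [Ring A] [Algebra K A] {x : A} {k c : ℕ}
    (hx : (x - 1) ^ k = 0) (hk : k ≤ p ^ c) : x ^ p ^ c = 1 := by
  have hpoly : (X - 1 : K[X]) ^ p ^ c = X ^ p ^ c - 1 := by rw [sub_pow_char_pow, one_pow]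
  have hx' := congrArg (aeval x) hpoly
  simp only [map_pow, map_sub, aeval_X, map_one] at hx'
  rw [← sub_eq_zero, ← hx', pow_eq_zero_of_le hk hx]

theorem one_add_nsmul_pow_pow_eq_one {R : Type*} [Ring R] {p e : ℕ}
    (hp : (p : R) ^ (e + 1) = 0) (y : R) : (1 + p • y) ^ p ^ e = 1 := by
  obtain ⟨q, hq⟩ : (p : ℤ[X]) ^ (e + 1) ∣ (1 + p • X) ^ p ^ e - 1 ^ p ^ e :=
    dvd_sub_pow_of_dvd_sub (by simp [nsmul_eq_mul]) e
  have hy := congrArg (aeval y) hq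
  simp only [one_pow, map_sub, map_pow, map_add, map_one, map_nsmul, aeval_X, map_mul,
    map_natCast, hp, zero_mul] at hy
  exact sub_eq_zero.1 hy

theorem ZMod.exists_eq_natCast_mul_of_castHom_eq_zero {n d : ℕ} [NeZero n] (hd : d ∣ n)
    {x : ZMod n} (hx : castHom hd (ZMod d) x = 0) : ∃ y, x = d * y := by
  rw [castHom_apply, cast_eq_val, natCast_eq_zero_iff] at hx
  obtain ⟨t, ht⟩ := hx
  exact ⟨t, by rw [← natCast_zmod_val x, ht, Nat.cast_mul]⟩

theorem Matrix.exists_eq_nsmul_of_mapMatrix_castHom_eq_zero {ι : Type*} [Fintype ι]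
    [DecidableEq ι] {n d : ℕ} [NeZero n] (hd : d ∣ n) {M : Matrix ι ι (ZMod n)}
    (hM : (ZMod.castHom hd (ZMod d)).mapMatrix M = 0) : ∃ Y, M = d • Y := by
  choose Y hY using fun i j =>
    ZMod.exists_eq_natCast_mul_of_castHom_eq_zero hd (congrFun (congrFun hM i) j)
  exact ⟨of Y, ext fun i j => by simp [hY, nsmul_eq_mul]⟩

theorem ZMod.eq_of_forall_castHom_ordProj_eq {n : ℕ} (hn : n ≠ 0) {x y : ZMod n}
    (h : ∀ p ∈ n.primeFactors, castHom (Nat.ordProj_dvd n p) (ZMod (p ^ n.factorization p)) x =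
      castHom (Nat.ordProj_dvd n p) (ZMod (p ^ n.factorization p)) y) : x = y := by
  have : NeZero n := ⟨hn⟩
  rw [← sub_eq_zero, ← natCast_zmod_val (x - y), natCast_eq_zero_iff]
  refine (Nat.dvd_iff_prime_pow_dvd_dvd _ n).2 fun p k hp hpk => ?_
  rcases Nat.eq_zero_or_pos k with rfl | hk
  · exact (pow_zero p).symm ▸ one_dvd _
  have hpn : p ∈ n.primeFactors :=
    Nat.mem_primeFactors.2 ⟨hp, (dvd_pow_self p hk.ne').trans hpk, hn⟩
  have hval := h p hpn
  rw [← sub_eq_zero, ← map_sub, castHom_apply, cast_eq_val, natCast_eq_zero_iff] at hval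
  exact (pow_dvd_pow p ((hp.pow_dvd_iff_le_factorization hn).1 hpk)).trans hval

theorem Matrix.eq_of_forall_mapMatrix_castHom_ordProj_eq {ι : Type*} [Fintype ι] [DecidableEq ι]
    {n : ℕ} (hn : n ≠ 0) {M N : Matrix ι ι (ZMod n)}
    (h : ∀ p ∈ n.primeFactors,
      (ZMod.castHom (Nat.ordProj_dvd n p) (ZMod (p ^ n.factorization p))).mapMatrix M =
      (ZMod.castHom (Nat.ordProj_dvd n p) (ZMod (p ^ n.factorization p))).mapMatrix N) :
    M = N :=
  ext fun i j => ZMod.eq_of_forall_castHom_ordProj_eq hn fun p hp => congrFun (congrFun (h p hp) i) j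

theorem Matrix.pow_eq_one_of_isUnit_zmod_prime_pow {ι : Type*} [Fintype ι] [DecidableEq ι]
    {p e c D : ℕ} [hp : Fact p.Prime] (he : e ≠ 0) {M : Matrix ι ι (ZMod (p ^ e))}
    (hM : IsUnit M) (hD : ∀ d, 0 < d → d ≤ Fintype.card ι → p ^ d - 1 ∣ D)
    (hc : Fintype.card ι ≤ p ^ c) : M ^ (D * p ^ c * p ^ (e - 1)) = 1 := by
  have : NeZero (p ^ e) := ⟨pow_ne_zero e hp.out.ne_zero⟩
  set π := (ZMod.castHom (dvd_pow_self p he) (ZMod p)).mapMatrix (m := ι)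
  have hred : π (M ^ (D * p ^ c) - 1) = 0 := by
    rw [map_sub, map_one, sub_eq_zero, map_pow, pow_mul]
    refine pow_prime_pow_eq_one_of_sub_one_pow_eq_zero (K := ZMod p)
      (pow_sub_one_pow_card_eq_zero (hM.map π) ?_) hc
    simpa only [Nat.card_zmod] using hD
  obtain ⟨Y, hY⟩ := exists_eq_nsmul_of_mapMatrix_castHom_eq_zero _ hred
  have hpe : (p : Matrix ι ι (ZMod (p ^ e))) ^ (e - 1 + 1) = 0 := by
    rw [Nat.sub_add_cancel (Nat.one_le_iff_ne_zero.2 he), ← Nat.cast_pow,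
      ← map_natCast (algebraMap (ZMod (p ^ e)) _), ZMod.natCast_self, map_zero]
  rw [pow_mul, eq_add_of_sub_eq' hY]
  exact one_add_nsmul_pow_pow_eq_one hpe Y

theorem stmt8_general (m : ℕ) (hm : 2 ≤ m) (n : ℕ) (hn : 2 ≤ n)
    (h : ∀ p : ℕ, p.Prime → p ∣ n → Dm m p ∣ Km m n) :
    ∀ A : GL (Fin m) (ZMod n), A ^ Km m n = 1 := by
  intro A
  ext : 1
  rw [Units.val_pow_eq_pow_val, Units.val_one]
  refine eq_of_forall_mapMatrix_castHom_ordProj_eq (by omega) fun p hp => ?_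
  have hpp : Fact p.Prime := ⟨Nat.prime_of_mem_primeFactors hp⟩
  have he : n.factorization p ≠ 0 := Finsupp.mem_support_iff.1 (n.support_factorization ▸ hp)
  have hpow : (ZMod.castHom (Nat.ordProj_dvd n p) _).mapMatrix (A : Matrix (Fin m) (Fin m) _) ^
      (Dm m p * p ^ Nat.clog p m * p ^ (n.factorization p - 1)) = 1 :=
    pow_eq_one_of_isUnit_zmod_prime_pow he (A.isUnit.map _)
      (fun d hd hdm => pow_sub_one_dvd_Dm hpp.out.one_lt hd (by simpa using hdm))
      (by simpa using Nat.le_pow_clog hpp.out.one_lt m)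
  obtain ⟨t, ht⟩ := Dm_mul_pow_mul_pow_dvd_Km hm hp
    (h p hpp.out (Nat.dvd_of_mem_primeFactors hp))
  rw [map_pow, map_one, ht, pow_mul, hpow, one_pow]

theorem stmt8 (m : ℕ) (hm : 2 ≤ m) (n : ℕ) (hn : 2 ≤ n) (hnp : ¬ n.Prime)
    (h : ∀ p : ℕ, p.Prime → p ∣ n → Dm m p ∣ Km m n) :
    ∀ A : GL (Fin m) (ZMod n), A ^ Km m n = 1 :=
  stmt8_general m hm n hn h
end

section
/- Let m ≥ 2. If n is an m-Carmichael number, then n is not congruent to 2 modulo 4. -/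
open Finset Matrix

/-! If `n = 2a` with `a` odd, the `2`-adic valuation of `K_m(n)` is exactly `e = ⌈log₂ m⌉`:
`n` contributes one factor `2`, `∇_m(n)` contributes `2^(e-1)`, and `D_m(n)` is odd because
`Φ_j(n) ∣ n^j - 1`. On the other hand `n` has an odd prime factor `p`. For `d = 2^⌊log₂ m⌋ ≤ m`,
a generator of `GF(p^d)ˣ` acting by multiplication is an element of `GL(m, 𝔽_p)` of order
`p^d - 1`, which is divisible by `2^(⌊log₂ m⌋ + 2)` and hence by `2^(e+1)`. It lifts to
`GL(m, ℤ/nℤ)` by the Chinese remainder theorem, where its order would have to divide `K_m(n)`. -/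

lemma exists_orderOf_units_matrix_eq (p : ℕ) [Fact p.Prime] {ι : Type*} [Fintype ι]
    [DecidableEq ι] {d : ℕ} (hd : d ≠ 0) (hdι : d ≤ Fintype.card ι) :
    ∃ U : (Matrix ι ι (ZMod p))ˣ, orderOf U = p ^ d - 1 := by
  let F := GaloisField p d
  obtain ⟨g, hg⟩ := IsCyclic.exists_ofOrder_eq_natCard (α := Fˣ)
  let R := F × (Fin (Fintype.card ι - d) → ZMod p)
  have hR : Module.finrank (ZMod p) R = Fintype.card ι := by
    rw [Module.finrank_prod, GaloisField.finrank p hd, Module.finrank_fin_fun]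
    omega
  let b : Module.Basis ι (ZMod p) R :=
    (Module.finBasisOfFinrankEq _ _ hR).reindex (Fintype.equivFin ι).symm
  let φ : F →* Matrix ι ι (ZMod p) :=
    (Algebra.leftMulMatrix b : R →* Matrix ι ι (ZMod p)).comp (MonoidHom.inl F _)
  have hφ : Function.Injective φ :=
    (Algebra.leftMulMatrix_injective b).comp fun x y h => congrArg Prod.fst h
  refine ⟨Units.map φ g, ?_⟩
  rw [orderOf_injective _ (Units.map_injective hφ), hg, Nat.card_units, GaloisField.card p d hd]

lemma ZMod.isUnit_of_forall_castHom_ne_zero {n : ℕ} [NeZero n] {x : ZMod n}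
    (hx : ∀ q, q.Prime → ∀ hq : q ∣ n, ZMod.castHom hq (ZMod q) x ≠ 0) : IsUnit x := by
  rw [← ZMod.natCast_zmod_val x, ZMod.isUnit_iff_coprime]
  refine Nat.coprime_of_dvd fun q hq hqx hqn => hx q hq hqn ?_
  rw [← ZMod.natCast_zmod_val x, map_natCast, ZMod.natCast_eq_zero_iff]
  exact hqx

lemma ZMod.unitsMap_mapMatrix_castHom_surjective {ι : Type*} [Fintype ι] [DecidableEq ι]
    {n p : ℕ} [NeZero n] (hp : p.Prime) (hpn : p ∣ n) :
    Function.Surjective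
      (Units.map ((ZMod.castHom hpn (ZMod p)).mapMatrix (m := ι)).toMonoidHom) := by
  intro B
  have hco : Nat.Coprime (p ^ n.factorization p) (ordCompl[p] n) :=
    (Nat.coprime_ordCompl hp (NeZero.ne n)).pow_left _
  -- modulo a prime factor of `n`, `A` reduces to `B` (for `p`) or to `1` (for the others)
  let x (i j : ι) : ℕ :=
    Nat.chineseRemainder hco (B i j).val ((1 : Matrix ι ι ℕ) i j)
  let A : Matrix ι ι (ZMod n) := of fun i j => (x i j : ZMod n)
  have hreduce (q : ℕ) (hq : q ∣ n) (a : Matrix ι ι ℕ)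
      (hxa : ∀ i j, x i j ≡ a i j [MOD q]) :
      (ZMod.castHom hq (ZMod q)).mapMatrix A = a.map Nat.cast := by
    ext i j
    simpa [A] using (ZMod.natCast_eq_natCast_iff _ _ _).mpr (hxa i j)
  have hAp : (ZMod.castHom hpn (ZMod p)).mapMatrix A = B := by
    have hp_dvd : p ∣ p ^ n.factorization p :=
      dvd_pow_self p (hp.factorization_pos_of_dvd (NeZero.ne n) hpn).ne'
    rw [hreduce p hpn (of fun i j => (B i j).val)
      fun i j => (Nat.chineseRemainder hco _ _).2.1.of_dvd hp_dvd]
    have : NeZero p := ⟨hp.ne_zero⟩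
    ext i j
    exact ZMod.natCast_zmod_val (B i j)
  have hA : IsUnit A.det := by
    refine ZMod.isUnit_of_forall_castHom_ne_zero fun q hq hqn => ?_
    have := Fact.mk hq
    rw [RingHom.map_det]
    by_cases hqp : q = p
    · subst hqp
      rw [hAp]
      exact ((Matrix.isUnit_iff_isUnit_det _).mp B.isUnit).ne_zero
    · have hqc : q ∣ ordCompl[p] n := by
        have hqp' : Nat.Coprime q (p ^ n.factorization p) :=
          ((Nat.coprime_primes hq hp).mpr hqp).pow_right _
        refine hqp'.dvd_of_dvd_mul_left ?_
        rwa [Nat.ordProj_mul_ordCompl_eq_self]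
      rw [hreduce q hqn 1 fun i j => (Nat.chineseRemainder hco _ _).2.2.of_dvd hqc,
        Matrix.map_one _ Nat.cast_zero Nat.cast_one, det_one]
      exact one_ne_zero
  obtain ⟨U, hU⟩ := (Matrix.isUnit_iff_isUnit_det A).mpr hA
  exact ⟨U, Units.ext <| by simpa [hU] using hAp⟩

lemma exists_units_matrix_two_pow_dvd_orderOf {m n p : ℕ} [NeZero n] (hm : 2 ≤ m)
    (hp : p.Prime) (hp_odd : Odd p) (hpn : p ∣ n) :
    ∃ A : GL (Fin m) (ZMod n), 2 ^ (Nat.clog 2 m + 1) ∣ orderOf A := by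
  have := Fact.mk hp
  set k := Nat.log 2 m
  have hk : k ≠ 0 := (Nat.log_pos one_lt_two hm).ne'
  obtain ⟨U, hU⟩ := exists_orderOf_units_matrix_eq p (ι := Fin m) (d := 2 ^ k)
    (by positivity) (by simpa using Nat.pow_log_le_self 2 (by omega : m ≠ 0))
  obtain ⟨A, hA⟩ := ZMod.unitsMap_mapMatrix_castHom_surjective hp hpn U
  have hUA : orderOf U ∣ orderOf A := hA ▸ orderOf_map_dvd _ A
  refine ⟨A, dvd_trans ?_ hUA⟩
  have hclog : Nat.clog 2 m ≤ k + 1 :=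
    Nat.clog_le_of_le_pow (Nat.lt_pow_succ_log_self one_lt_two m).le
  have hval := padicValNat.pow_two_sub_one_ge hp.one_lt hp_odd.not_two_dvd_nat
    (pow_ne_zero k two_ne_zero) ((Nat.even_pow' hk).mpr even_two)
  rw [padicValNat.prime_pow] at hval
  rw [hU]
  refine (pow_dvd_pow 2 (by omega)).trans ((padicValNat_dvd_iff_le ?_).mpr hval)
  exact Nat.sub_ne_zero_of_lt (Nat.one_lt_pow (pow_ne_zero k two_ne_zero) hp.one_lt)

lemma odd_Dm {m n : ℕ} (hn : Even n) (hn1 : 1 < n) : Odd (Dm m n) := by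
  have hpos : 0 < ∏ j ∈ Icc 1 m, (Polynomial.cyclotomic j ℤ).eval (n : ℤ) :=
    prod_pos fun j _ => Polynomial.cyclotomic_pos' j (by exact_mod_cast hn1)
  have hodd : Odd (∏ j ∈ Icc 1 m, (Polynomial.cyclotomic j ℤ).eval (n : ℤ)) := by
    refine prod_induction _ Odd (fun _ _ => Odd.mul) odd_one fun j hj => ?_
    have hdvd : (Polynomial.cyclotomic j ℤ).eval (n : ℤ) ∣ (n : ℤ) ^ j - 1 := by
      simpa using
        Polynomial.eval_dvd (x := (n : ℤ)) (Polynomial.cyclotomic.dvd_X_pow_sub_one j ℤ)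
    have hj : j ≠ 0 := Nat.one_le_iff_ne_zero.mp (mem_Icc.mp hj).1
    have hpow : Odd ((n : ℤ) ^ j - 1) :=
      (((Int.even_coe_nat n).mpr hn).pow_of_ne_zero hj).sub_odd odd_one
    exact Int.not_even_iff_odd.mp fun h => Int.not_even_iff_odd.mpr hpow (h.trans_dvd hdvd)
  rw [Dm, ← Int.odd_coe_nat, Int.toNat_of_nonneg hpos.le]
  exact hodd

lemma nablam_eq_two_pow_mul_odd {m n : ℕ} (hn : Even n) (hn0 : n ≠ 0) :
    ∃ b, Odd b ∧ nablam m n = 2 ^ (Nat.clog 2 m - 1) * b := by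
  have h2 : 2 ∈ n.primeFactors :=
    Nat.mem_primeFactors.mpr ⟨Nat.prime_two, even_iff_two_dvd.mp hn, hn0⟩
  refine ⟨_, ?_, (mul_prod_erase _ _ h2).symm⟩
  refine prod_induction _ Odd (fun _ _ => Odd.mul) odd_one fun q hq => ?_
  obtain ⟨hq2, hq⟩ := mem_erase.mp hq
  exact ((Nat.prime_of_mem_primeFactors hq).odd_of_ne_two hq2).pow

lemma Km_eq_two_pow_mul_odd {m n : ℕ} (hm : 2 ≤ m) (hn : n % 4 = 2) :
    ∃ w, Odd w ∧ Km m n = 2 ^ Nat.clog 2 m * w := by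
  obtain ⟨a, ha, rfl⟩ : ∃ a, Odd a ∧ n = 2 * a :=
    ⟨n / 2, Nat.odd_iff.mpr (by omega), by omega⟩
  obtain ⟨b, hb, hnab⟩ := nablam_eq_two_pow_mul_odd (m := m) (even_two_mul a) (by omega)
  refine ⟨a * b * Dm m (2 * a), (ha.mul hb).mul (odd_Dm (even_two_mul a) (by omega)), ?_⟩
  have hclog : 2 ^ Nat.clog 2 m = 2 * 2 ^ (Nat.clog 2 m - 1) := by
    rw [← pow_succ', Nat.sub_add_cancel (Nat.clog_pos one_lt_two hm)]
  rw [Km, hnab, hclog]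
  ring

theorem stmt12 (m : ℕ) (hm : 2 ≤ m) (n : ℕ) (h : IsMCarmichael m n) :
    n % 4 ≠ 2 := by
  intro hn4
  obtain ⟨hn_not_prime, -, hpow⟩ := h
  have : NeZero n := ⟨by omega⟩
  obtain ⟨p, hp, hpn⟩ : ∃ p, p.Prime ∧ p ∣ n / 2 := Nat.exists_prime_and_dvd fun h =>
    hn_not_prime (by rw [show n = 2 by omega]; exact Nat.prime_two)
  have hp_odd : Odd p := (Nat.odd_iff.mpr (by omega)).of_dvd_nat hpn
  obtain ⟨A, hA⟩ := exists_units_matrix_two_pow_dvd_orderOf hm hp hp_odd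
    (hpn.trans (Nat.div_dvd_of_dvd (by omega)))
  obtain ⟨w, hw, hK⟩ := Km_eq_two_pow_mul_odd hm hn4
  have hdvd : 2 ^ (Nat.clog 2 m + 1) ∣ 2 ^ Nat.clog 2 m * w :=
    hK ▸ hA.trans (orderOf_dvd_of_pow_eq_one (hpow A))
  rw [pow_succ, Nat.mul_dvd_mul_iff_left (by positivity)] at hdvd
  exact hw.not_two_dvd_nat hdvd
end

section
/- For every odd prime p and every m ≥ 2, the 2-adic valuation of D_m(p) = ∏_{j=1}^m Φ_j(p) is at least ⌊log_2 m⌋ + 2. -/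
open Finset Matrix

/-!
Put `L = ⌊log₂ m⌋`. The divisors of `2 ^ L` all lie in `[1, m]`, so `D_m(p)` is a multiple of
`∏_{d ∣ 2^L} Φ_d(p) = p ^ 2 ^ L - 1`. For odd `p` this is divisible by `2 ^ (L + 2)`: `p² - 1` is
divisible by `8`, and each further squaring `p ^ 2 ^ (k + 1) - 1 = (p ^ 2 ^ k - 1)(p ^ 2 ^ k + 1)`
contributes at least one more factor `2`.
-/

open Polynomial

theorem Int.two_pow_add_two_dvd_pow_two_pow_sub_one {x : ℤ} (hx : Odd x) {k : ℕ} (hk : 1 ≤ k) :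
    2 ^ (k + 2) ∣ x ^ 2 ^ k - 1 := by
  induction k, hk using Nat.le_induction with
  | base => simpa using Int.eight_dvd_sq_sub_one_of_odd hx
  | succ k _ ih =>
    have hsucc : x ^ 2 ^ (k + 1) - 1 = (x ^ 2 ^ k - 1) * (x ^ 2 ^ k + 1) := by ring
    rw [hsucc, pow_succ]
    exact mul_dvd_mul ih (hx.pow.add_one).two_dvd

theorem Polynomial.pow_sub_one_dvd_prod_eval_cyclotomic {R : Type*} [CommRing R] (x : R)
    {n m : ℕ} (hn : 0 < n) (hnm : n ≤ m) :
    x ^ n - 1 ∣ ∏ j ∈ Icc 1 m, (cyclotomic j R).eval x := by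
  have hsub : n.divisors ⊆ Icc 1 m := fun d hd =>
    mem_Icc.mpr ⟨Nat.pos_of_mem_divisors hd, (Nat.divisor_le hd).trans hnm⟩
  have hprod : ∏ d ∈ n.divisors, (cyclotomic d R).eval x = x ^ n - 1 := by
    simp [← eval_prod, prod_cyclotomic_eq_X_pow_sub_one hn]
  exact hprod ▸ prod_dvd_prod_of_subset _ _ _ hsub

theorem stmt13 (p : ℕ) (hp : p.Prime) (hodd : p ≠ 2) (m : ℕ) (hm : 2 ≤ m) :
    Nat.log 2 m + 2 ≤ (Dm m p).factorization 2 := by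
  set L := Nat.log 2 m
  have hL : 1 ≤ L := Nat.le_log_of_pow_le one_lt_two (by simpa using hm)
  have hpos : 0 < ∏ j ∈ Icc 1 m, (cyclotomic j ℤ).eval (p : ℤ) :=
    prod_pos fun j _ => cyclotomic_pos' j (by exact_mod_cast hp.one_lt)
  have hDm : (Dm m p : ℤ) = ∏ j ∈ Icc 1 m, (cyclotomic j ℤ).eval (p : ℤ) :=
    Int.toNat_of_nonneg hpos.le
  have hdvd : (2 : ℤ) ^ (L + 2) ∣ Dm m p := hDm ▸
    (Int.two_pow_add_two_dvd_pow_two_pow_sub_one (by exact_mod_cast hp.odd_of_ne_two hodd) hL).trans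
      (pow_sub_one_dvd_prod_eval_cyclotomic _ (by positivity) (Nat.pow_log_le_self 2 (by omega)))
  have hne : Dm m p ≠ 0 := by exact_mod_cast hDm ▸ hpos.ne'
  exact (Nat.prime_two.pow_dvd_iff_le_factorization hne).mp (by exact_mod_cast hdvd)
end

section
/- If n ≡ 2 (mod 4) and m ≥ 2, then the 2-adic valuation of K_m(n) = n·∇_m(n)·D_m(n) equals ⌈log_2 m⌉. -/
/-!
Since `Φ_j(0) = ±1`, every `Φ_j(n)` is congruent to a unit modulo `n`, so `D_m(n)` is coprime
to `n` and contributes nothing at `2`. The `2`-part of `∇_m(n)` is `2 ^ (⌈log₂ m⌉ - 1)` and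
that of `n ≡ 2 (mod 4)` is `2`, which add up to `⌈log₂ m⌉` because `m ≥ 2`.
-/

open Finset Matrix

namespace Polynomial

variable {R : Type*} [CommRing R]

theorem isUnit_eval_zero_cyclotomic (j : ℕ) : IsUnit ((cyclotomic j R).eval 0) := by
  rcases Nat.lt_trichotomy j 1 with hj | rfl | hj
  · simp [Nat.lt_one_iff.mp hj]
  · simp
  · rw [← coeff_zero_eq_eval_zero, cyclotomic_coeff_zero R hj]
    exact isUnit_one

theorem isCoprime_eval_cyclotomic (j : ℕ) (a : R) : IsCoprime a ((cyclotomic j R).eval a) := by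
  obtain ⟨c, hc⟩ : a ∣ (cyclotomic j R).eval a - (cyclotomic j R).eval 0 := by
    simpa using sub_dvd_eval_sub a 0 (cyclotomic j R)
  rw [sub_eq_iff_eq_add'.mp hc, IsCoprime.add_mul_left_right_iff]
  obtain ⟨u, hu⟩ := isUnit_eval_zero_cyclotomic (R := R) j
  exact hu ▸ ⟨0, ↑u⁻¹, by simp⟩

end Polynomial

open Polynomial

theorem Dm_eq_prod {m n : ℕ} (hn : 0 < n) :
    (Dm m n : ℤ) = ∏ j ∈ Icc 1 m, (cyclotomic j ℤ).eval (n : ℤ) :=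
  Int.toNat_of_nonneg <| prod_nonneg fun j _ => cyclotomic_nonneg j (by exact_mod_cast hn)

theorem coprime_Dm {m n : ℕ} (hn : 0 < n) : n.Coprime (Dm m n) := by
  rw [← Nat.isCoprime_iff_coprime, Dm_eq_prod hn]
  exact IsCoprime.prod_right fun j _ => isCoprime_eval_cyclotomic j (n : ℤ)

theorem Dm_pos {m n : ℕ} (hn : 1 < n) : 0 < Dm m n := by
  rw [← Int.ofNat_lt, Nat.cast_zero, Dm_eq_prod (by omega)]
  exact prod_pos fun j _ => cyclotomic_pos' j (by exact_mod_cast hn)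

theorem nablam_pos (m n : ℕ) : 0 < nablam m n :=
  prod_pos fun _ hp => pow_pos (Nat.prime_of_mem_primeFactors hp).pos _

theorem factorization_nablam {m n p : ℕ} (hp : p.Prime) (hpn : p ∣ n) (hn : n ≠ 0) :
    (nablam m n).factorization p = Nat.clog p m - 1 := by
  rw [nablam,
    Nat.factorization_prod fun q hq => (pow_pos (Nat.prime_of_mem_primeFactors hq).pos _).ne',
    Finset.sum_apply', Finset.sum_eq_single_of_mem p (Nat.mem_primeFactors.mpr ⟨hp, hpn, hn⟩)]
  · simp [hp.factorization]
  · intro q hq hqp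
    simp [(Nat.prime_of_mem_primeFactors hq).factorization, hqp]

theorem factorization_Km {m n p : ℕ} (hp : p.Prime) (hpn : p ∣ n) (hn : 1 < n) :
    (Km m n).factorization p = n.factorization p + (Nat.clog p m - 1) := by
  have hDm : (Dm m n).factorization p = 0 := Nat.factorization_eq_zero_of_not_dvd <|
    hp.coprime_iff_not_dvd.mp <| (coprime_Dm (m := m) (by omega)).coprime_dvd_left hpn
  rw [Km, Nat.factorization_mul (Nat.mul_pos (by omega) (nablam_pos m n)).ne' (Dm_pos hn).ne',
    Nat.factorization_mul (by omega) (nablam_pos m n).ne']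
  simp [factorization_nablam hp hpn (by omega), hDm]

theorem stmt14 (n : ℕ) (hn : n % 4 = 2) (m : ℕ) (hm : 2 ≤ m) :
    (Km m n).factorization 2 = Nat.clog 2 m := by
  have hfn : n.factorization 2 = 1 := by
    have h2 : 2 ^ 1 ∣ n := by omega
    have h4 : ¬ 2 ^ 2 ∣ n := by omega
    rw [Nat.prime_two.pow_dvd_iff_le_factorization (by omega)] at h2 h4
    omega
  have hclog : 1 ≤ Nat.clog 2 m := Nat.clog_pos one_lt_two hm
  rw [factorization_Km Nat.prime_two (by omega) (by omega), hfn]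
  omega
end
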